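/- Let A be a convex acceptance set with nonempty interior in an ordered locally convex space X, and S a traded asset such that ρ_{A,S} does not attain −∞. If ρ_{A,S} is finitely valued on a dense linear subspace of X, then ρ_{A,S} is finitely valued (and continuous) on all of X. -/

import Mathlib

/-! The amounts `m` with `x + (m / S₀) • S_T ∈ A` form a set whose infimum `R x` is `ρ_{A,S}(x)`.
Convexity of `A` makes the set of `x` with a nonempty set of amounts convex; it contains `A`,
which has interior, and the dense subspace, so it is the whole space (every point is the midpoint
of a point of `int A` and a point of the subspace). As `ρ` never takes the value `-∞`, `R` is then
a real-valued convex function, and it is `≤ 0` on the open set `int A`. A convex function on a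
topological vector space that is bounded above near one point is bounded above near every point,
hence continuous. -/

open Filter Topology

variable {X : Type*} [AddCommGroup X] [Module ℝ X] [PartialOrder X]
  [CovariantClass X X (· + ·) (· ≤ ·)] [PosSMulMono ℝ X]
  [TopologicalSpace X] [IsTopologicalAddGroup X] [ContinuousSMul ℝ X]

/-- The risk measure `ρ_{A,S}(x) = inf {m : x + (m/S₀)·S_T ∈ A}`, valued in `EReal`
(with `inf ∅ = ⊤` and unbounded-below giving `⊥`). -/
noncomputable def rho (A : Set X) (S0 : ℝ) (ST : X) (x : X) : EReal :=
  sInf ((fun r : ℝ => (r : EReal)) '' {r : ℝ | x + (r / S0) • ST ∈ A})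

/-- A set is monotone if it contains, with any element, every larger element. -/
def MonotoneSet (A : Set X) : Prop := ∀ x ∈ A, ∀ y, x ≤ y → y ∈ A

/-- An acceptance set: nonempty, proper, and monotone. -/
def AcceptanceSet (A : Set X) : Prop := A.Nonempty ∧ A ≠ Set.univ ∧ MonotoneSet A

/-- The algebraic core (algebraic interior) of a set. -/
def algCore (A : Set X) : Set X :=
  {x | ∀ y : X, ∃ ε > 0, ∀ l : ℝ, |l| < ε → x + l • y ∈ A}

open Set
open scoped Pointwise

section ConvexAnalysis

variable {E : Type*} [AddCommGroup E] [Module ℝ E] [TopologicalSpace E] [IsTopologicalAddGroup E]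

lemma Convex.eq_univ_of_dense {C : Set E} (hC : Convex ℝ C) (hint : (interior C).Nonempty)
    (hd : Dense C) : C = univ := by
  refine eq_univ_of_forall fun x => ?_
  obtain ⟨x₀, hx₀⟩ := hint
  have hU : IsOpen {s : E | (2 : ℝ) • x - s ∈ interior C} :=
    isOpen_interior.preimage (by fun_prop)
  obtain ⟨s, hsC, hs⟩ := hd.exists_mem_open hU ⟨(2 : ℝ) • x - x₀, by simpa using hx₀⟩
  have hmid := hC (interior_subset hs) hsC (a := 1 / 2) (b := 1 / 2)
    (by norm_num) (by norm_num) (by norm_num)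
  convert hmid using 1
  module

end ConvexAnalysis

section ConvexFunction

variable {E : Type*} [AddCommGroup E] [Module ℝ E] {f : E → ℝ}

lemma ConvexOn.le_add_mul_sub_of_le (hf : ConvexOn ℝ univ f) {x w : E} {t M : ℝ}
    (ht₀ : 0 ≤ t) (ht₁ : t ≤ 1) (hM : f (x + w) ≤ M) :
    f (x + t • w) ≤ f x + t * (M - f x) := by
  have h := hf.2 (mem_univ x) (mem_univ (x + w)) (sub_nonneg.2 ht₁) ht₀ (sub_add_cancel 1 t)
  rw [show (1 - t) • x + t • (x + w) = x + t • w by module, smul_eq_mul, smul_eq_mul] at h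
  nlinarith

lemma ConvexOn.sub_mul_sub_le_of_le (hf : ConvexOn ℝ univ f) {x w : E} {t M : ℝ}
    (ht₀ : 0 ≤ t) (hM : f (x - w) ≤ M) :
    f x - t * (M - f x) ≤ f (x + t • w) := by
  have ht : 0 < 1 + t := by linarith
  have h := hf.2 (mem_univ (x + t • w)) (mem_univ (x - w))
    (by positivity : (0 : ℝ) ≤ 1 / (1 + t)) (by positivity : 0 ≤ t / (1 + t)) (by field_simp)
  rw [show (1 / (1 + t)) • (x + t • w) + (t / (1 + t)) • (x - w) = x by
    match_scalars <;> field_simp; ring, smul_eq_mul, smul_eq_mul] at h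
  have h' : (1 + t) * f x ≤ f (x + t • w) + t * f (x - w) := by
    calc (1 + t) * f x ≤ (1 + t) * (1 / (1 + t) * f (x + t • w) + t / (1 + t) * f (x - w)) :=
          mul_le_mul_of_nonneg_left h ht.le
      _ = f (x + t • w) + t * f (x - w) := by field_simp
  nlinarith

lemma ConvexOn.abs_sub_le_of_le (hf : ConvexOn ℝ univ f) {x w : E} {t M : ℝ}
    (ht₀ : 0 ≤ t) (ht₁ : t ≤ 1) (hadd : f (x + w) ≤ M) (hsub : f (x - w) ≤ M) :
    |f (x + t • w) - f x| ≤ t * (M - f x) := by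
  have hup := hf.le_add_mul_sub_of_le ht₀ ht₁ hadd
  have hlow := hf.sub_mul_sub_le_of_le ht₀ hsub
  rw [abs_sub_le_iff]
  constructor <;> linarith

end ConvexFunction

section ConvexFunctionContinuity

variable {E : Type*} [AddCommGroup E] [Module ℝ E] [TopologicalSpace E] [IsTopologicalAddGroup E]
  [ContinuousConstSMul ℝ E] {f : E → ℝ}

lemma ConvexOn.continuousAt_of_eventually_le (hf : ConvexOn ℝ univ f) {x : E} {M : ℝ}
    (hM : ∀ᶠ y in 𝓝 x, f y ≤ M) : ContinuousAt f x := by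
  have hle : f x ≤ M := hM.self_of_nhds
  have hM₀ : ∀ᶠ w in 𝓝 (0 : E), f (x + w) ≤ M ∧ f (x - w) ≤ M :=
    ((continuous_const_add x).tendsto' 0 x (add_zero x)).eventually hM |>.and
      (((continuous_sub_left x).tendsto' 0 x (sub_zero x)).eventually hM)
  rw [ContinuousAt, Metric.tendsto_nhds]
  intro ε hε
  set t := ε / (M - f x + ε)
  have ht₀ : 0 < t := by positivity
  have ht₁ : t ≤ 1 := (div_le_one (by linarith)).2 (by linarith)
  have htε : t * (M - f x) < ε := by
    rw [div_mul_eq_mul_div, div_lt_iff₀ (by linarith)]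
    nlinarith
  have hrescale : Tendsto (fun y => t⁻¹ • (y - x)) (𝓝 x) (𝓝 0) :=
    (by fun_prop : Continuous fun y => t⁻¹ • (y - x)).tendsto' x 0 (by simp)
  filter_upwards [hrescale.eventually hM₀] with y hy
  have hbound := hf.abs_sub_le_of_le ht₀.le ht₁ hy.1 hy.2
  rw [smul_smul, mul_inv_cancel₀ ht₀.ne', one_smul, add_sub_cancel] at hbound
  rw [Real.dist_eq]
  exact hbound.trans_lt htε

lemma ConvexOn.exists_eventually_le (hf : ConvexOn ℝ univ f) {x₀ : E} {M : ℝ}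
    (hM : ∀ᶠ y in 𝓝 x₀, f y ≤ M) (x : E) : ∃ M', ∀ᶠ y in 𝓝 x, f y ≤ M' := by
  refine ⟨(M + f ((2 : ℝ) • x - x₀)) / 2, ?_⟩
  have hg : Tendsto (fun y => x₀ + (2 : ℝ) • (y - x)) (𝓝 x) (𝓝 x₀) :=
    (by fun_prop : Continuous fun y => x₀ + (2 : ℝ) • (y - x)).tendsto' x x₀ (by simp)
  filter_upwards [hg.eventually hM] with y hy
  have h := hf.2 (mem_univ (x₀ + (2 : ℝ) • (y - x))) (mem_univ ((2 : ℝ) • x - x₀))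
    (by norm_num : (0 : ℝ) ≤ 1 / 2) (by norm_num : (0 : ℝ) ≤ 1 / 2) (by norm_num)
  rw [show (1 / 2 : ℝ) • (x₀ + (2 : ℝ) • (y - x)) + (1 / 2 : ℝ) • ((2 : ℝ) • x - x₀) = y by
    module, smul_eq_mul, smul_eq_mul] at h
  linarith

lemma ConvexOn.continuous_of_eventually_le (hf : ConvexOn ℝ univ f) {x₀ : E} {M : ℝ}
    (hM : ∀ᶠ y in 𝓝 x₀, f y ≤ M) : Continuous f :=
  continuous_iff_continuousAt.2 fun x =>
    let ⟨_, hM'⟩ := hf.exists_eventually_le hM x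
    hf.continuousAt_of_eventually_le hM'

end ConvexFunctionContinuity

section RiskMeasure

variable {E : Type*} [AddCommGroup E] [Module ℝ E] {A : Set E} {S0 : ℝ} {ST : E} {x : E}

def acceptableAmounts (A : Set E) (S0 : ℝ) (ST : E) (x : E) : Set ℝ :=
  {r | x + (r / S0) • ST ∈ A}

lemma zero_mem_acceptableAmounts (hx : x ∈ A) : 0 ∈ acceptableAmounts A S0 ST x := by
  simpa [acceptableAmounts] using hx

lemma acceptableAmounts_nonempty_of_rho_ne_top (h : rho A S0 ST x ≠ ⊤) :
    (acceptableAmounts A S0 ST x).Nonempty := by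
  contrapose! h
  change sInf ((fun r : ℝ => (r : EReal)) '' acceptableAmounts A S0 ST x) = ⊤
  rw [h, image_empty, sInf_empty]

lemma bddBelow_acceptableAmounts_of_rho_ne_bot (h : rho A S0 ST x ≠ ⊥) :
    BddBelow (acceptableAmounts A S0 ST x) := by
  contrapose! h
  refine sInf_eq_bot.2 fun b hb => ?_
  obtain ⟨q, -, hqb⟩ := EReal.lt_iff_exists_real_btwn.1 hb
  obtain ⟨r, hr, hrq⟩ := not_bddBelow_iff.1 h q
  exact ⟨r, ⟨r, hr, rfl⟩, (EReal.coe_lt_coe_iff.2 hrq).trans hqb⟩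

lemma rho_eq_coe_sInf_acceptableAmounts (hne : (acceptableAmounts A S0 ST x).Nonempty)
    (hbd : BddBelow (acceptableAmounts A S0 ST x)) :
    rho A S0 ST x = (sInf (acceptableAmounts A S0 ST x) : ℝ) :=
  (Monotone.map_csInf_of_continuousAt continuous_coe_real_ereal.continuousAt
    (fun _ _ => EReal.coe_le_coe_iff.2) hne hbd).symm

lemma smul_add_smul_subset_acceptableAmounts (hA : Convex ℝ A) {a b : ℝ} (ha : 0 ≤ a)
    (hb : 0 ≤ b) (hab : a + b = 1) (x y : E) :
    a • acceptableAmounts A S0 ST x + b • acceptableAmounts A S0 ST y ⊆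
      acceptableAmounts A S0 ST (a • x + b • y) := by
  rintro _ ⟨_, ⟨r, hr, rfl⟩, _, ⟨r', hr', rfl⟩, rfl⟩
  have hmem := hA hr hr' ha hb hab
  simp only [acceptableAmounts, mem_ofPred_eq, smul_eq_mul] at hmem ⊢
  convert hmem using 1
  simp only [div_eq_mul_inv]
  module

lemma convex_setOf_acceptableAmounts_nonempty (hA : Convex ℝ A) :
    Convex ℝ {x | (acceptableAmounts A S0 ST x).Nonempty} :=
  fun x hx y hy _ _ ha hb hab =>
    (hx.smul_set.add hy.smul_set).mono (smul_add_smul_subset_acceptableAmounts hA ha hb hab x y)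

lemma convexOn_sInf_acceptableAmounts (hA : Convex ℝ A)
    (hne : ∀ x, (acceptableAmounts A S0 ST x).Nonempty)
    (hbd : ∀ x, BddBelow (acceptableAmounts A S0 ST x)) :
    ConvexOn ℝ univ fun x => sInf (acceptableAmounts A S0 ST x) := by
  refine ⟨convex_univ, fun x _ y _ a b ha hb hab => ?_⟩
  calc sInf (acceptableAmounts A S0 ST (a • x + b • y))
      ≤ sInf (a • acceptableAmounts A S0 ST x + b • acceptableAmounts A S0 ST y) :=
        csInf_le_csInf (hbd _) ((hne x).smul_set.add (hne y).smul_set)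
          (smul_add_smul_subset_acceptableAmounts hA ha hb hab x y)
    _ = a • sInf (acceptableAmounts A S0 ST x) + b • sInf (acceptableAmounts A S0 ST y) := by
        rw [csInf_add (hne x).smul_set ((hbd x).smul_of_nonneg ha) (hne y).smul_set
          ((hbd y).smul_of_nonneg hb), Real.sInf_smul_of_nonneg ha, Real.sInf_smul_of_nonneg hb]

end RiskMeasure

theorem rho_finite_of_finite_on_dense_subspace
    (A : Set X) (S0 : ℝ) (ST : X)
    (hconv : Convex ℝ A) (hint : (interior A).Nonempty)
    (hnobot : ∀ x : X, rho A S0 ST x ≠ ⊥)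
    (S : Submodule ℝ X) (hdense : Dense (S : Set X))
    (hfin : ∀ x ∈ S, rho A S0 ST x ≠ ⊤) :
    (∀ x : X, rho A S0 ST x ≠ ⊤) ∧ Continuous (rho A S0 ST) := by
  have hdom : {x | (acceptableAmounts A S0 ST x).Nonempty} = univ :=
    (convex_setOf_acceptableAmounts_nonempty hconv).eq_univ_of_dense
      (hint.mono (interior_mono fun _ hx => ⟨0, zero_mem_acceptableAmounts hx⟩))
      (hdense.mono fun x hx => acceptableAmounts_nonempty_of_rho_ne_top (hfin x hx))
  have hne x : (acceptableAmounts A S0 ST x).Nonempty := eq_univ_iff_forall.1 hdom x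
  have hbd x := bddBelow_acceptableAmounts_of_rho_ne_bot (hnobot x)
  have hrho : rho A S0 ST = fun x => ((sInf (acceptableAmounts A S0 ST x) : ℝ) : EReal) :=
    funext fun x => rho_eq_coe_sInf_acceptableAmounts (hne x) (hbd x)
  obtain ⟨x₀, hx₀⟩ := hint
  have hcont := (convexOn_sInf_acceptableAmounts hconv hne hbd).continuous_of_eventually_le
    (M := 0) (eventually_of_mem (isOpen_interior.mem_nhds hx₀) fun y hy =>
      csInf_le (hbd y) (zero_mem_acceptableAmounts (interior_subset hy)))
  rw [hrho]
  exact ⟨fun _ => EReal.coe_ne_top _, continuous_coe_real_ereal.comp hcont⟩
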